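/- Suppose X is a set, δ : X → (0,∞), C > 0, N a positive integer, and assume: for every p ∈ X there exists g_p : X → ℂ in a linear function space B (with norm ‖f‖ = sup δ^N |f| finite on B, B complete, norm convergence implying pointwise convergence) with g_p(p) = 1 and ‖g_p‖ ≤ C·δ(p). Suppose further there is a sequence of points q_k ∈ X with δ(q_k) ≤ δ(q_{k−1})^N / (k·2^k·C) and f₁ ≡ 1 ∈ B. Then there exists f ∈ B and a subsequence of points along which |f| tends to infinity; precisely, one can construct f ∈ B with |f(q_j)| ≥ j − 1 for all j. -/

import Mathlib

/-!
Starting from `f₀ = 0`, set `f_k = f_{k-1} + k α_k g_{q_k}` with `α_k` the phase of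
`f_{k-1}(q_k)`, so that `|f_k(q_k)| = |f_{k-1}(q_k)| + k ≥ k`. Evaluating a peak function at its
own peak gives `δ^N ≤ C δ`; hence the condition on `δ(q_k)` makes `δ ∘ q` decrease and gives
`‖f_{k+1} - f_k‖ ≤ δ(q_k)^N / 2^(k+1)` for `k ≥ 1`. So `f_k → f` in `B` with
`‖f - f_j‖ ≤ δ(q_j)^N / 2^j`, and since `δ^N |h| ≤ ‖h‖` pointwise, `|f(q_j) - f_j(q_j)| ≤ 1`.
-/

open Filter Topology Complex

theorem norm_add_mul_exp_arg_mul_I (z : ℂ) {c : ℝ} (hc : 0 ≤ c) :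
    ‖z + c * exp (arg z * I)‖ = ‖z‖ + c := by
  nth_rw 1 [← norm_mul_exp_arg_mul_I z]
  rw [← add_mul, norm_mul, norm_exp_ofReal_mul_I, mul_one, ← ofReal_add, norm_real,
    Real.norm_of_nonneg (by positivity)]

section Geometric

variable {E : Type*} [PseudoMetricSpace E] {F : ℕ → E} {D : ℝ} {j : ℕ}

theorem dist_add_succ_le_geometric_two
    (h : ∀ n, j ≤ n → dist (F n) (F (n + 1)) ≤ D / 2 ^ (n + 1)) (n : ℕ) :
    dist (F (n + j)) (F (n + 1 + j)) ≤ D / 2 ^ j / 2 / 2 ^ n := by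
  rw [add_right_comm]
  refine (h (n + j) (Nat.le_add_left j n)).trans_eq ?_
  rw [div_div, div_div, pow_succ, pow_add]
  ring

theorem cauchySeq_of_dist_succ_le_div_two_pow
    (h : ∀ n, j ≤ n → dist (F n) (F (n + 1)) ≤ D / 2 ^ (n + 1)) : CauchySeq F :=
  (cauchySeq_shift j).1 (cauchySeq_of_le_geometric_two (dist_add_succ_le_geometric_two h))

theorem dist_le_of_dist_succ_le_div_two_pow_of_tendsto
    (h : ∀ n, j ≤ n → dist (F n) (F (n + 1)) ≤ D / 2 ^ (n + 1)) {f : E}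
    (hF : Tendsto F atTop (𝓝 f)) : dist (F j) f ≤ D / 2 ^ j := by
  simpa using dist_le_of_le_geometric_two_of_tendsto₀ (dist_add_succ_le_geometric_two h)
    ((tendsto_add_atTop_iff_nat j).2 hF)

end Geometric

section PeakSum

variable {X B : Type*} [NormedAddCommGroup B] [NormedSpace ℂ B]

/-- The paper's `f_k`, started at `f₀ = 0`. -/
noncomputable def peakSum (ev : B →ₗ[ℂ] X → ℂ) (g : X → B) (q : ℕ → X) : ℕ → B
  | 0 => 0
  | n + 1 => peakSum ev g q n +
      (((n + 1 : ℕ) : ℂ) * exp (arg (ev (peakSum ev g q n) (q (n + 1))) * I)) • g (q (n + 1))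

variable {ev : B →ₗ[ℂ] X → ℂ} {g : X → B} {q : ℕ → X}

theorem le_norm_peakSum_apply (hg : ∀ p, ev (g p) p = 1) (n : ℕ) :
    (n : ℝ) ≤ ‖ev (peakSum ev g q n) (q n)‖ := by
  cases n with
  | zero => simp
  | succ n =>
    have hval := norm_add_mul_exp_arg_mul_I (ev (peakSum ev g q n) (q (n + 1)))
      (Nat.cast_nonneg (α := ℝ) (n + 1))
    simp only [peakSum, map_add, map_smul, Pi.add_apply, Pi.smul_apply, hg, smul_eq_mul,
      mul_one, ofReal_natCast] at hval ⊢
    linarith [norm_nonneg (ev (peakSum ev g q n) (q (n + 1)))]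

theorem norm_peakSum_succ_sub (n : ℕ) :
    ‖peakSum ev g q (n + 1) - peakSum ev g q n‖ = (n + 1) * ‖g (q (n + 1))‖ := by
  rw [peakSum, add_sub_cancel_left, norm_smul, norm_mul, norm_exp_ofReal_mul_I, mul_one,
    norm_natCast]
  push_cast
  rfl

variable {δ : X → ℝ} {N : ℕ} {C : ℝ}

theorem norm_peakSum_succ_sub_le (hC : 0 < C) (hg : ∀ p, ‖g p‖ ≤ C * δ p)
    (hq : ∀ k : ℕ, 2 ≤ k → δ (q k) ≤ δ (q (k - 1)) ^ N / (k * 2 ^ k * C))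
    {n : ℕ} (hn : 1 ≤ n) :
    ‖peakSum ev g q (n + 1) - peakSum ev g q n‖ ≤ δ (q n) ^ N / 2 ^ (n + 1) := by
  have hqn : δ (q (n + 1)) ≤ δ (q n) ^ N / ((n + 1) * 2 ^ (n + 1) * C) := by
    simpa using hq (n + 1) (by omega)
  calc ‖peakSum ev g q (n + 1) - peakSum ev g q n‖
      ≤ (n + 1) * (C * (δ (q n) ^ N / ((n + 1) * 2 ^ (n + 1) * C))) := by
        rw [norm_peakSum_succ_sub]
        gcongr
        exact (hg _).trans (mul_le_mul_of_nonneg_left hqn hC.le)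
    _ = δ (q n) ^ N / 2 ^ (n + 1) := by
        field_simp

end PeakSum

theorem antitoneOn_comp_of_le_pow_div {X : Type*} {δ : X → ℝ} {q : ℕ → X} {N : ℕ} {C : ℝ}
    (hδ : ∀ p, 0 < δ p) (hC : 0 < C) (hpow : ∀ p, δ p ^ N ≤ C * δ p)
    (hq : ∀ k : ℕ, 2 ≤ k → δ (q k) ≤ δ (q (k - 1)) ^ N / (k * 2 ^ k * C)) :
    AntitoneOn (δ ∘ q) {k | 1 ≤ k} := by
  refine antitoneOn_nat_Ici_of_succ_le fun n hn => ?_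
  have hM : (1 : ℝ) ≤ (n + 1 : ℕ) * 2 ^ (n + 1) :=
    one_le_mul_of_one_le_of_one_le (by simp) (one_le_pow₀ (by norm_num))
  calc δ (q (n + 1)) ≤ δ (q n) ^ N / ((n + 1 : ℕ) * 2 ^ (n + 1) * C) := hq (n + 1) (by omega)
    _ ≤ δ (q n) ^ N / C :=
        div_le_div_of_nonneg_left (pow_nonneg (hδ _).le N) hC (le_mul_of_one_le_left hC.le hM)
    _ ≤ δ (q n) := div_le_of_le_mul₀ hC.le (hδ _).le (by linarith [hpow (q n)])

theorem stmt_7_general (X : Type*) (B : Type*) [NormedAddCommGroup B] [NormedSpace ℂ B]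
    [CompleteSpace B] (ev : B →ₗ[ℂ] (X → ℂ))
    (δ : X → ℝ) (hδ : ∀ p, 0 < δ p)
    (C : ℝ) (hC : 0 < C) (N : ℕ)
    (hnorm : ∀ g : B, IsLUB (Set.range fun p => δ p ^ N * ‖ev g p‖) ‖g‖)
    (hpeak : ∀ p : X, ∃ g : B, ev g p = 1 ∧ ‖g‖ ≤ C * δ p)
    (q : ℕ → X)
    (hq : ∀ k : ℕ, 2 ≤ k → δ (q k) ≤ δ (q (k - 1)) ^ N / (k * 2 ^ k * C)) :
    ∃ f : B, ∀ j : ℕ, 1 ≤ j → (j : ℝ) - 1 ≤ ‖ev f (q j)‖ := by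
  choose g hg1 hg2 using hpeak
  have hev : ∀ h p, δ p ^ N * ‖ev h p‖ ≤ ‖h‖ := fun h p => (hnorm h).1 ⟨p, rfl⟩
  have hpow : ∀ p, δ p ^ N ≤ C * δ p := fun p => by
    simpa [hg1] using (hev (g p) p).trans (hg2 p)
  have hanti := antitoneOn_comp_of_le_pow_div hδ hC hpow hq
  set F := peakSum ev g q
  have hstep : ∀ j, 1 ≤ j → ∀ n, j ≤ n →
      dist (F n) (F (n + 1)) ≤ δ (q j) ^ N / 2 ^ (n + 1) := by
    intro j hj n hjn
    rw [dist_comm, dist_eq_norm]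
    refine (norm_peakSum_succ_sub_le hC hg2 hq (hj.trans hjn)).trans ?_
    gcongr
    · exact (hδ _).le
    · exact hanti hj (hj.trans hjn) hjn
  obtain ⟨f, hf⟩ :=
    cauchySeq_tendsto_of_complete (cauchySeq_of_dist_succ_le_div_two_pow (hstep 1 le_rfl))
  refine ⟨f, fun j hj => ?_⟩
  have htail : ‖F j - f‖ ≤ δ (q j) ^ N := by
    rw [← dist_eq_norm]
    exact (dist_le_of_dist_succ_le_div_two_pow_of_tendsto (hstep j hj) hf).trans
      (div_le_self (pow_nonneg (hδ _).le N) (one_le_pow₀ (by norm_num)))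
  have hclose : ‖ev (F j - f) (q j)‖ ≤ 1 :=
    le_of_mul_le_mul_left (by simpa using (hev _ _).trans htail) (pow_pos (hδ _) N)
  have hle := norm_le_norm_add_norm_sub' (ev (F j) (q j)) (ev f (q j))
  rw [← Pi.sub_apply, ← map_sub] at hle
  linarith [le_norm_peakSum_apply (q := q) hg1 j]

/-- Abstract version of Lemma 2.1: let `B` be a Banach space of functions on `X`
with norm `‖f‖ = sup_p δ(p)^N |f(p)|`, suppose that for every `p ∈ X` there is
`g_p ∈ B` with `g_p(p) = 1` and `‖g_p‖ ≤ C·δ(p)`, that `B` contains the constant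
function `1`, and that there are points `q_k` with
`δ(q_k) ≤ δ(q_{k−1})^N / (k·2^k·C)`. Then there is `f ∈ B` with
`|f(q_j)| ≥ j − 1` for all `j`; in particular `|f|` tends to infinity along a
subsequence of the `q_j`. -/
theorem stmt_7 (X : Type*) (B : Type*) [NormedAddCommGroup B] [NormedSpace ℂ B]
    [CompleteSpace B] (ev : B →ₗ[ℂ] (X → ℂ))
    (δ : X → ℝ) (hδ : ∀ p, 0 < δ p) (hδ1 : ∀ p, δ p ≤ 1)
    (C : ℝ) (hC : 0 < C) (N : ℕ) (hN : 1 ≤ N)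
    (hnorm : ∀ g : B, IsLUB (Set.range fun p => δ p ^ N * ‖ev g p‖) ‖g‖)
    (hev : ∀ (g : ℕ → B) (h : B), Filter.Tendsto g Filter.atTop (nhds h) →
      ∀ x, Filter.Tendsto (fun j => ev (g j) x) Filter.atTop (nhds (ev h x)))
    (hpeak : ∀ p : X, ∃ g : B, ev g p = 1 ∧ ‖g‖ ≤ C * δ p)
    (hone : ∃ one : B, ∀ p, ev one p = 1)
    (q : ℕ → X)
    (hq : ∀ k : ℕ, 2 ≤ k → δ (q k) ≤ δ (q (k - 1)) ^ N / (k * 2 ^ k * C)) :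
    ∃ f : B, ∀ j : ℕ, 1 ≤ j → (j : ℝ) - 1 ≤ ‖ev f (q j)‖ :=
  stmt_7_general X B ev δ hδ C hC N hnorm hpeak q hq
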